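/- Model existence for PE-adapted subset models: there exists a PE-adapted L*_CS-subset model. In particular, the single-world structure M = ({ω}, {ω}, V, E) with V(ω,⊥)=0, V(ω,P)=1 for all atomic propositions P, V(ω,A→B)=1 iff V(ω,A)=0 or V(ω,B)=1, V(ω,t:F)=1 iff t ⋡ 1 or (t ≽ 1 and V(ω,F)=1), and E(ω,t) = {ω} if t ≽ 1 and E(ω,t) = ∅ otherwise, is a PE-adapted L*_CS-subset model. -/
import Mathlib


/-- Justification terms `Tm^P`: constants `0`, `1`, `c_i`, variables `x_i`,
the distinguished constant `c*`, sum `+`, union `∪` and `!`. -/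
inductive TmP : Type
  | zero : TmP
  | one : TmP
  | const : ℕ → TmP
  | var : ℕ → TmP
  | cstar : TmP
  | plus : TmP → TmP → TmP
  | union : TmP → TmP → TmP
  | bang : TmP → TmP

/-- Equality of terms in the free distributive lattice generated by the atomic
terms (and the terms `!t`), where `+` is meet, `∪` is join and `0` is bottom. -/
inductive LatEq : TmP → TmP → Prop
  | refl (t : TmP) : LatEq t t
  | symm {s t : TmP} : LatEq s t → LatEq t s
  | trans {s t u : TmP} : LatEq s t → LatEq t u → LatEq s u
  | plus_congr {s s' t t' : TmP} :
      LatEq s s' → LatEq t t' → LatEq (s.plus t) (s'.plus t')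
  | union_congr {s s' t t' : TmP} :
      LatEq s s' → LatEq t t' → LatEq (s.union t) (s'.union t')
  | plus_comm (s t : TmP) : LatEq (s.plus t) (t.plus s)
  | plus_assoc (s t u : TmP) : LatEq ((s.plus t).plus u) (s.plus (t.plus u))
  | plus_idem (s : TmP) : LatEq (s.plus s) s
  | union_comm (s t : TmP) : LatEq (s.union t) (t.union s)
  | union_assoc (s t u : TmP) : LatEq ((s.union t).union u) (s.union (t.union u))
  | union_idem (s : TmP) : LatEq (s.union s) s
  | absorb_plus (s t : TmP) : LatEq (s.plus (s.union t)) s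
  | absorb_union (s t : TmP) : LatEq (s.union (s.plus t)) s
  | distrib (s t u : TmP) :
      LatEq (s.plus (t.union u)) ((s.plus t).union (s.plus u))
  | zero_union (t : TmP) : LatEq (TmP.zero.union t) t

/-- The lattice order on terms: `s ≼ t` iff `s ∪ t = t`. -/
def LatLe (s t : TmP) : Prop := LatEq (s.union t) t

/-- The abbreviation `st := s + t + c*`. -/
def TmP.appP (s t : TmP) : TmP := (s.plus t).plus TmP.cstar

/-- Formulas of `L_prob`: atomic propositions, `⊥`, implication and `t:F`. -/
inductive FmlP : Type
  | atom : ℕ → FmlP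
  | bot : FmlP
  | imp : FmlP → FmlP → FmlP
  | just : TmP → FmlP → FmlP

namespace FmlP
/-- `¬A := A → ⊥`. -/
def neg (A : FmlP) : FmlP := A.imp .bot
/-- `A ∧ B := ¬(A → ¬B)`. -/
def and' (A B : FmlP) : FmlP := (A.imp B.neg).neg
end FmlP

/-- Purely propositional formulas. -/
inductive PFml : Type
  | atom : ℕ → PFml
  | bot : PFml
  | imp : PFml → PFml → PFml

/-- Boolean evaluation of a propositional formula under a valuation. -/
def PFml.eval (v : ℕ → Bool) : PFml → Bool
  | .atom n => v n
  | .bot => false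
  | .imp A B => !(A.eval v) || B.eval v

/-- `A` is a propositional tautology. -/
def PTaut (A : PFml) : Prop := ∀ v : ℕ → Bool, A.eval v = true

/-- The inclusion of propositional formulas into `L_prob`. -/
def PFml.toFmlP : PFml → FmlP
  | .atom n => .atom n
  | .bot => .bot
  | .imp A B => .imp A.toFmlP B.toFmlP

/-- The logic `PE` of probabilistic evidence: classical axioms and modus
ponens, `s:(A→B) → (t:A → [st]:B)`, `(s:A ∧ t:A) → [s∪t]:A`, `1:A` for
propositional tautologies `A` and `0:F` for propositional formulas `F`, and
`t:X → s:X` whenever `s ≼ t`. -/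
inductive DerivPE : FmlP → Prop
  | cl1 (A B : FmlP) : DerivPE (A.imp (B.imp A))
  | cl2 (A B C : FmlP) :
      DerivPE ((A.imp (B.imp C)).imp ((A.imp B).imp (A.imp C)))
  | cl3 (A : FmlP) : DerivPE (A.neg.neg.imp A)
  | j (s t : TmP) (A B : FmlP) :
      DerivPE ((FmlP.just s (A.imp B)).imp
        ((FmlP.just t A).imp (FmlP.just (s.appP t) B)))
  | aggr (s t : TmP) (A : FmlP) :
      DerivPE (((FmlP.just s A).and' (FmlP.just t A)).imp
        (FmlP.just (s.union t) A))
  | one_taut (A : PFml) (h : PTaut A) : DerivPE (FmlP.just TmP.one A.toFmlP)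
  | zero_prop (F : PFml) : DerivPE (FmlP.just TmP.zero F.toFmlP)
  | mono (s t : TmP) (X : FmlP) (h : LatLe s t) :
      DerivPE ((FmlP.just t X).imp (FmlP.just s X))
  | mp {A B : FmlP} : DerivPE (A.imp B) → DerivPE A → DerivPE B

/-- `bangIterP n t = !…!t` with `n` occurrences of `!`. -/
def bangIterP : ℕ → TmP → TmP
  | 0, t => t
  | n + 1, t => (bangIterP n t).bang

/-- `anFmlP c A n = !…!c : !…!c : … : !c : c : A` (with `n, n-1, …, 1, 0` bangs). -/
def anFmlP (c : TmP) (A : FmlP) : ℕ → FmlP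
  | 0 => FmlP.just c A
  | n + 1 => FmlP.just (bangIterP (n + 1) c) (anFmlP c A n)

/-- A `PE`-adapted `L*_CS`-subset model over the language `L_prob`: an
`L*_CS`-subset model which moreover satisfies `E(ω,1) = W0`, `E(ω,0) = ∅` and
`E(ω, s∪t) = E(ω,s) ∪ E(ω,t)` for all `ω ∈ W0`. -/
structure PEModel (CS : Set (ℕ × FmlP)) (W : Type*) : Type _ where
  W0 : Set W
  V : W → FmlP → Prop
  E : W → TmP → Set W
  w0_nonempty : W0.Nonempty
  v_bot : ∀ ω ∈ W0, ¬ V ω FmlP.bot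
  v_imp : ∀ ω ∈ W0, ∀ F G : FmlP, V ω (F.imp G) ↔ (¬ V ω F ∨ V ω G)
  v_just : ∀ ω ∈ W0, ∀ (t : TmP) (F : FmlP),
      V ω (FmlP.just t F) ↔ E ω t ⊆ {υ | V υ F}
  e_plus : ∀ ω ∈ W0, ∀ s t : TmP, E ω (s.plus t) ⊆ E ω s ∩ E ω t
  e_cstar : ∀ ω ∈ W0,
      E ω TmP.cstar ⊆ {υ | ∀ A B : FmlP, V υ A → V υ (A.imp B) → V υ B}
  e_cs : ∀ ω ∈ W0, ∀ (c : ℕ) (A : FmlP), (c, A) ∈ CS →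
      E ω (TmP.const c) ⊆ {υ | V υ A}
  e_cs_bang : ∀ ω ∈ W0, ∀ (c : ℕ) (A : FmlP), (c, A) ∈ CS → ∀ n : ℕ,
      E ω (bangIterP (n + 1) (TmP.const c)) ⊆
        {υ | V υ (anFmlP (TmP.const c) A n)}
  e_one : ∀ ω ∈ W0, E ω TmP.one = W0
  e_zero : ∀ ω ∈ W0, E ω TmP.zero = ∅
  e_union : ∀ ω ∈ W0, ∀ s t : TmP, E ω (s.union t) = E ω s ∪ E ω t

/-- The valuation of the single-world model: `V(ω,⊥)=0`; `V(ω,P)=1` for atomic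
`P`; `V(ω,A→B)=1` iff `V(ω,A)=0` or `V(ω,B)=1`; `V(ω,t:F)=1` iff `t ⋡ 1` or
(`t ≽ 1` and `V(ω,F)=1`). -/
def pointV : FmlP → Prop
  | .bot => False
  | .atom _ => True
  | .imp A B => ¬ pointV A ∨ pointV B
  | .just t F => ¬ LatLe TmP.one t ∨ (LatLe TmP.one t ∧ pointV F)

open Classical in
/-- The evidence function of the single-world model: `E(ω,t) = {ω}` if
`t ≽ 1` and `E(ω,t) = ∅` otherwise. -/
noncomputable def pointE (t : TmP) : Set PUnit :=
  if LatLe TmP.one t then {PUnit.unit} else ∅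

/-- The Boolean valuation sending `1` to true and all other generators to
false, with `+` as meet and `∪` as join. -/
def gval : TmP → Prop
  | .zero => False
  | .one => True
  | .const _ => False
  | .var _ => False
  | .cstar => False
  | .plus s t => gval s ∧ gval t
  | .union s t => gval s ∨ gval t
  | .bang _ => False

lemma gval_sound {s t : TmP} (h : LatEq s t) : gval s ↔ gval t := by
  induction h <;> simp_all [gval] <;> tauto

lemma latLe_trans {s t u : TmP} (h1 : LatLe s t) (h2 : LatLe t u) : LatLe s u := by
  unfold LatLe at *
  have e1 : LatEq (s.union u) (s.union (t.union u)) :=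
    LatEq.union_congr (LatEq.refl s) (LatEq.symm h2)
  have e2 : LatEq (s.union (t.union u)) ((s.union t).union u) :=
    LatEq.symm (LatEq.union_assoc s t u)
  have e3 : LatEq ((s.union t).union u) (t.union u) :=
    LatEq.union_congr h1 (LatEq.refl u)
  exact LatEq.trans (LatEq.trans (LatEq.trans e1 e2) e3) h2

lemma latLe_union_left (s t : TmP) : LatLe s (s.union t) := by
  unfold LatLe
  exact LatEq.trans (LatEq.symm (LatEq.union_assoc s s t))
    (LatEq.union_congr (LatEq.union_idem s) (LatEq.refl t))

lemma latLe_union_right (s t : TmP) : LatLe t (s.union t) := by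
  unfold LatLe
  have e1 : LatEq (t.union (s.union t)) (t.union (t.union s)) :=
    LatEq.union_congr (LatEq.refl t) (LatEq.union_comm s t)
  have e2 : LatEq (t.union (t.union s)) ((t.union t).union s) :=
    LatEq.symm (LatEq.union_assoc t t s)
  have e3 : LatEq ((t.union t).union s) (t.union s) :=
    LatEq.union_congr (LatEq.union_idem t) (LatEq.refl s)
  exact LatEq.trans (LatEq.trans (LatEq.trans e1 e2) e3) (LatEq.union_comm t s)

lemma latLe_one_of_gval : ∀ t : TmP, gval t → LatLe TmP.one t := by
  intro t
  induction t with
  | zero => intro h; exact absurd h (by simp [gval])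
  | one => intro _; exact LatEq.union_idem TmP.one
  | const n => intro h; exact absurd h (by simp [gval])
  | var n => intro h; exact absurd h (by simp [gval])
  | cstar => intro h; exact absurd h (by simp [gval])
  | bang t ih => intro h; exact absurd h (by simp [gval])
  | union s t ihs iht =>
    intro h
    rcases h with h | h
    · exact latLe_trans (ihs h) (latLe_union_left s t)
    · exact latLe_trans (iht h) (latLe_union_right s t)
  | plus s t ihs iht =>
    intro h
    have h1 : LatEq (TmP.one.union s) s := ihs h.1
    have h2 : LatEq (TmP.one.union t) t := iht h.2
    set X : TmP := (TmP.one.union s).plus t with hX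
    have e1 : LatEq (s.plus t) ((TmP.one.union s).plus (TmP.one.union t)) :=
      LatEq.plus_congr (LatEq.symm h1) (LatEq.symm h2)
    have e2 : LatEq ((TmP.one.union s).plus (TmP.one.union t))
        (((TmP.one.union s).plus TmP.one).union X) :=
      LatEq.distrib (TmP.one.union s) TmP.one t
    have e3 : LatEq ((TmP.one.union s).plus TmP.one) TmP.one :=
      LatEq.trans (LatEq.plus_comm (TmP.one.union s) TmP.one)
        (LatEq.absorb_plus TmP.one s)
    have h3 : LatEq (s.plus t) (TmP.one.union X) :=
      LatEq.trans (LatEq.trans e1 e2) (LatEq.union_congr e3 (LatEq.refl X))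
    unfold LatLe
    have e4 : LatEq (TmP.one.union (s.plus t)) (TmP.one.union (TmP.one.union X)) :=
      LatEq.union_congr (LatEq.refl TmP.one) h3
    have e5 : LatEq (TmP.one.union (TmP.one.union X)) ((TmP.one.union TmP.one).union X) :=
      LatEq.symm (LatEq.union_assoc TmP.one TmP.one X)
    have e6 : LatEq ((TmP.one.union TmP.one).union X) (TmP.one.union X) :=
      LatEq.union_congr (LatEq.union_idem TmP.one) (LatEq.refl X)
    exact LatEq.trans (LatEq.trans (LatEq.trans e4 e5) e6) (LatEq.symm h3)

lemma latLe_one_iff (t : TmP) : LatLe TmP.one t ↔ gval t := by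
  constructor
  · intro h
    have := gval_sound h
    simp [gval] at this
    exact this
  · exact latLe_one_of_gval t

open Classical in
lemma pointE_eq (t : TmP) :
    pointE t = if gval t then ({PUnit.unit} : Set PUnit) else ∅ := by
  simp [pointE, latLe_one_iff]

/-- **Model existence for `PE`-adapted subset models**: there exists a
`PE`-adapted `L*_CS`-subset model; in particular, the single-world structure
`({ω}, {ω}, pointV, pointE)` is one. -/
theorem pe_model_exists (CS : Set (ℕ × FmlP)) :
    ∃ M : PEModel CS PUnit,
      M.W0 = ({PUnit.unit} : Set PUnit) ∧
      M.V = (fun _ F => pointV F) ∧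
      M.E = (fun _ t => pointE t) := by
  classical
  refine ⟨{ W0 := {PUnit.unit}
            V := fun _ F => pointV F
            E := fun _ t => pointE t
            w0_nonempty := ⟨PUnit.unit, rfl⟩
            v_bot := by intro ω _; simp [pointV]
            v_imp := by intro ω _ F G; simp [pointV]
            v_just := ?_
            e_plus := ?_
            e_cstar := ?_
            e_cs := ?_
            e_cs_bang := ?_
            e_one := by intro ω _; simp [pointE_eq, gval]
            e_zero := by intro ω _; simp [pointE_eq, gval]
            e_union := ?_ }, rfl, rfl, rfl⟩
  · -- v_just
    intro ω _ t F
    by_cases h : LatLe TmP.one t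
    · simp [pointV, pointE, h, Set.subset_def]
    · simp [pointV, pointE, h]
  · -- e_plus
    intro ω _ s t
    simp only [pointE_eq]
    by_cases hs : gval s <;> by_cases ht : gval t <;>
      simp [gval, hs, ht]
  · -- e_cstar
    intro ω _
    simp [pointE_eq, gval]
  · -- e_cs
    intro ω _ c A _
    simp [pointE_eq, gval]
  · -- e_cs_bang
    intro ω _ c A _ n
    simp [pointE_eq, bangIterP, gval]
  · -- e_union
    intro ω _ s t
    simp only [pointE_eq]
    by_cases hs : gval s <;> by_cases ht : gval t <;>
      simp [gval, hs, ht]
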